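/- arXiv:0810.4670 — 4 statements merged into one kernel-verified Lean document; each statement's English description precedes it below -/
import Mathlib

section
/- The polynomial ζ_1 is a singular vector of weight λ_4: E_1(ζ_1) = E_2(ζ_1) = E_3(ζ_1) = E_4(ζ_1) = 0, H_1(ζ_1) = H_2(ζ_1) = H_3(ζ_1) = 0, and H_4(ζ_1) = ζ_1. -/
open MvPolynomial

noncomputable section

/-- The polynomial algebra `A = ℂ[x_1, …, x_26]`. -/
abbrev A : Type := MvPolynomial (Fin 26) ℂ

/-- The variable `x_r` (1-indexed), `0` out of range. -/
def x (r : ℕ) : A :=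
  if h : 1 ≤ r ∧ r ≤ 26 then X (⟨r - 1, by omega⟩ : Fin 26) else 0

/-- The partial derivative `∂_r` (1-indexed), `0` out of range. -/
def d (r : ℕ) (f : A) : A :=
  if h : 1 ≤ r ∧ r ≤ 26 then pderiv (⟨r - 1, by omega⟩ : Fin 26) f else 0

/-- Simple positive root vector actions. -/
def E1 (f : A) : A :=
  x 4 * d 6 f + x 5 * d 8 f + x 7 * d 9 f - x 18 * d 20 f - x 19 * d 22 f - x 21 * d 23 f

def E2 (f : A) : A :=
  x 3 * d 4 f + x 8 * d 10 f + x 9 * d 11 f - x 16 * d 18 f - x 17 * d 19 f - x 23 * d 24 f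

def E3 (f : A) : A :=
  -x 2 * d 3 f - x 4 * d 5 f - x 6 * d 8 f + x 10 * d 12 f + x 11 * (d 13 f - 2 * d 14 f)
    - x 14 * d 16 f - x 15 * d 17 f + x 19 * d 21 f + x 22 * d 23 f + x 24 * d 25 f

def E4 (f : A) : A :=
  -x 1 * d 2 f - x 5 * d 7 f - x 8 * d 9 f - x 10 * d 11 f + x 12 * (d 14 f - 2 * d 13 f)
    - x 13 * d 15 f + x 16 * d 17 f + x 18 * d 19 f + x 20 * d 22 f + x 25 * d 26 f

/-- Simple negative root vector actions. -/
def F1 (f : A) : A :=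
  -x 6 * d 4 f - x 8 * d 5 f - x 9 * d 7 f + x 20 * d 18 f + x 22 * d 19 f + x 23 * d 21 f

def F2 (f : A) : A :=
  -x 4 * d 3 f - x 10 * d 8 f - x 11 * d 9 f + x 18 * d 16 f + x 19 * d 17 f + x 24 * d 23 f

def F3 (f : A) : A :=
  x 3 * d 2 f + x 5 * d 4 f + x 8 * d 6 f - x 12 * d 10 f + x 14 * d 11 f
    + x 16 * (2 * d 14 f - d 13 f) + x 17 * d 15 f - x 21 * d 19 f - x 23 * d 22 f
    - x 25 * d 24 f

def F4 (f : A) : A :=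
  x 2 * d 1 f + x 7 * d 5 f + x 9 * d 8 f + x 11 * d 10 f + x 13 * d 12 f
    + x 15 * (2 * d 13 f - d 14 f) - x 17 * d 16 f - x 19 * d 18 f - x 22 * d 20 f
    - x 26 * d 25 f

/-- Cartan subalgebra basis actions. -/
def H1 (f : A) : A :=
  x 4 * d 4 f + x 5 * d 5 f - x 6 * d 6 f + x 7 * d 7 f - x 8 * d 8 f - x 9 * d 9 f
    + x 18 * d 18 f + x 19 * d 19 f - x 20 * d 20 f + x 21 * d 21 f - x 22 * d 22 f
    - x 23 * d 23 f

def H2 (f : A) : A :=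
  x 3 * d 3 f - x 4 * d 4 f + x 8 * d 8 f + x 9 * d 9 f - x 10 * d 10 f - x 11 * d 11 f
    + x 16 * d 16 f + x 17 * d 17 f - x 18 * d 18 f - x 19 * d 19 f + x 23 * d 23 f
    - x 24 * d 24 f

def H3 (f : A) : A :=
  x 2 * d 2 f - x 3 * d 3 f + x 4 * d 4 f - x 5 * d 5 f + x 6 * d 6 f - x 8 * d 8 f
    + x 10 * d 10 f + 2 * x 11 * d 11 f - x 12 * d 12 f + x 15 * d 15 f
    - 2 * x 16 * d 16 f - x 17 * d 17 f + x 19 * d 19 f - x 21 * d 21 f + x 22 * d 22 f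
    - x 23 * d 23 f + x 24 * d 24 f - x 25 * d 25 f

def H4 (f : A) : A :=
  x 1 * d 1 f - x 2 * d 2 f + x 5 * d 5 f - x 7 * d 7 f + x 8 * d 8 f - x 9 * d 9 f
    + x 10 * d 10 f - x 11 * d 11 f + 2 * x 12 * d 12 f - 2 * x 15 * d 15 f
    + x 16 * d 16 f - x 17 * d 17 f + x 18 * d 18 f - x 19 * d 19 f + x 20 * d 20 f
    - x 22 * d 22 f + x 25 * d 25 f - x 26 * d 26 f

/-- The singular vector `ζ_1`. -/
def zeta1 : A :=
  x 1 * (2 * x 13 + x 14) - 3 * x 2 * x 12 - 3 * x 3 * x 10 + 3 * x 4 * x 8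
    - 3 * x 5 * x 6

/-- The singular vector `ϑ`. -/
def theta : A :=
  x 1 * (-(x 2 * x 13) + x 1 * x 15 - x 3 * x 11 + x 4 * x 9 - x 6 * x 7)
    + x 2 * (x 2 * x 12 + x 3 * x 10 - x 4 * x 8 + x 5 * x 6)

/-- The quadratic invariant `η_1`. -/
def eta1 : A :=
  3 * ∑ r ∈ Finset.Icc 1 12, x r * x (27 - r) - x 13 ^ 2 - x 13 * x 14 - x 14 ^ 2

def zeta2 : A := F4 zeta1
def zeta3 : A := F3 zeta2
def zeta4 : A := -F2 zeta3
def zeta5 : A := F3 zeta4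
def zeta6 : A := -F1 zeta4
def zeta7 : A := F4 zeta5
def zeta8 : A := -F1 zeta5
def zeta9 : A := -F1 zeta7
def zeta10 : A := -F2 zeta8
def zeta11 : A := -F2 zeta9
def zeta12 : A := -F3 zeta10
def zeta13 : A := F4 zeta12
def zeta14 : A := F3 zeta11

/-- The algebra automorphism `τ` with `τ(x_r) = x_{27-r}` for `r ∉ {13,14}`,
`τ(x_13) = -x_13`, `τ(x_14) = -x_14` (0-indexed internally). -/
def tau : A →ₐ[ℂ] A :=
  aeval (fun i : Fin 26 =>
    if i.val = 12 then -X (⟨12, by omega⟩ : Fin 26)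
    else if i.val = 13 then -X (⟨13, by omega⟩ : Fin 26)
    else X (⟨25 - i.val, by omega⟩ : Fin 26))

/-- The family `ζ_r`, `1 ≤ r ≤ 26` (`0` out of range). -/
def zeta : ℕ → A := fun r =>
  match r with
  | 1 => zeta1 | 2 => zeta2 | 3 => zeta3 | 4 => zeta4 | 5 => zeta5 | 6 => zeta6
  | 7 => zeta7 | 8 => zeta8 | 9 => zeta9 | 10 => zeta10 | 11 => zeta11
  | 12 => zeta12 | 13 => zeta13 | 14 => zeta14
  | 15 => tau zeta12 | 16 => tau zeta11 | 17 => tau zeta10 | 18 => tau zeta9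
  | 19 => tau zeta8 | 20 => tau zeta7 | 21 => tau zeta6 | 22 => tau zeta5
  | 23 => tau zeta4 | 24 => tau zeta3 | 25 => tau zeta2 | 26 => tau zeta1
  | _ => 0

/-- The cubic invariant `η_2`. -/
def eta2 : A :=
  3 * ∑ r ∈ Finset.Icc 1 12, (zeta r * x (27 - r) + x r * zeta (27 - r))
    - 2 * x 13 * zeta 13 - x 13 * zeta 14 - x 14 * zeta 13 - 2 * x 14 * zeta 14

/-- The `F_4`-invariant Laplace operator `Δ`. -/
def Lap (f : A) : A :=
  3 * ∑ r ∈ Finset.Icc 1 12, d r (d (27 - r) f) - d 13 (d 13 f) - d 13 (d 14 f)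
    - d 14 (d 14 f)

@[simp] lemma pderiv_ofNat' (i : Fin 26) (n : ℕ) [n.AtLeastTwo] :
    pderiv i (no_index (OfNat.ofNat n) : A) = 0 := by
  rw [← map_ofNat (C : ℂ →+* A) n]; simp

set_option maxHeartbeats 2000000 in
/-- `ζ_1` is a singular vector of weight `λ_4`. -/
theorem stmt5 :
    E1 zeta1 = 0 ∧ E2 zeta1 = 0 ∧ E3 zeta1 = 0 ∧ E4 zeta1 = 0 ∧
    H1 zeta1 = 0 ∧ H2 zeta1 = 0 ∧ H3 zeta1 = 0 ∧ H4 zeta1 = zeta1 := by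
  refine ⟨?_, ?_, ?_, ?_, ?_, ?_, ?_, ?_⟩ <;>
  · simp only [E1, E2, E3, E4, H1, H2, H3, H4, zeta1, x, d]
    norm_num [pderiv_mul, pderiv_X, pderiv_ofNat', Pi.single_apply, Fin.ext_iff]
    ring
end
end

section
/- The polynomial ϑ is a singular vector of weight λ_3: E_1(ϑ) = E_2(ϑ) = E_3(ϑ) = E_4(ϑ) = 0, H_1(ϑ) = H_2(ϑ) = H_4(ϑ) = 0, and H_3(ϑ) = ϑ. -/
open MvPolynomial

noncomputable section

set_option maxHeartbeats 1000000

lemma dth1 : d 1 theta = -(x 2 * x 13) + 2 * x 1 * x 15 - x 3 * x 11 + x 4 * x 9 - x 6 * x 7 := by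
  simp only [d, theta, x]
  norm_num [pderiv_mul, pderiv_X, Pi.single_apply, Fin.ext_iff]
  try ring

lemma dth2 : d 2 theta = -(x 1 * x 13) + 2 * x 2 * x 12 + x 3 * x 10 - x 4 * x 8 + x 5 * x 6 := by
  simp only [d, theta, x]
  norm_num [pderiv_mul, pderiv_X, Pi.single_apply, Fin.ext_iff]
  try ring

lemma dth3 : d 3 theta = -(x 1 * x 11) + x 2 * x 10 := by
  simp only [d, theta, x]
  norm_num [pderiv_mul, pderiv_X, Pi.single_apply, Fin.ext_iff]
  try ring

lemma dth4 : d 4 theta = x 1 * x 9 - x 2 * x 8 := by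
  simp only [d, theta, x]
  norm_num [pderiv_mul, pderiv_X, Pi.single_apply, Fin.ext_iff]
  try ring

lemma dth5 : d 5 theta = x 2 * x 6 := by
  simp only [d, theta, x]
  norm_num [pderiv_mul, pderiv_X, Pi.single_apply, Fin.ext_iff]
  try ring

lemma dth6 : d 6 theta = -(x 1 * x 7) + x 2 * x 5 := by
  simp only [d, theta, x]
  norm_num [pderiv_mul, pderiv_X, Pi.single_apply, Fin.ext_iff]
  try ring

lemma dth7 : d 7 theta = -(x 1 * x 6) := by
  simp only [d, theta, x]
  norm_num [pderiv_mul, pderiv_X, Pi.single_apply, Fin.ext_iff]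
  try ring

lemma dth8 : d 8 theta = -(x 2 * x 4) := by
  simp only [d, theta, x]
  norm_num [pderiv_mul, pderiv_X, Pi.single_apply, Fin.ext_iff]
  try ring

lemma dth9 : d 9 theta = x 1 * x 4 := by
  simp only [d, theta, x]
  norm_num [pderiv_mul, pderiv_X, Pi.single_apply, Fin.ext_iff]
  try ring

lemma dth10 : d 10 theta = x 2 * x 3 := by
  simp only [d, theta, x]
  norm_num [pderiv_mul, pderiv_X, Pi.single_apply, Fin.ext_iff]
  try ring

lemma dth11 : d 11 theta = -(x 1 * x 3) := by
  simp only [d, theta, x]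
  norm_num [pderiv_mul, pderiv_X, Pi.single_apply, Fin.ext_iff]
  try ring

lemma dth12 : d 12 theta = x 2 * x 2 := by
  simp only [d, theta, x]
  norm_num [pderiv_mul, pderiv_X, Pi.single_apply, Fin.ext_iff]
  try ring

lemma dth13 : d 13 theta = -(x 1 * x 2) := by
  simp only [d, theta, x]
  norm_num [pderiv_mul, pderiv_X, Pi.single_apply, Fin.ext_iff]
  try ring

lemma dth14 : d 14 theta = (0:A) := by
  simp only [d, theta, x]
  norm_num [pderiv_mul, pderiv_X, Pi.single_apply, Fin.ext_iff]
  try ring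

lemma dth15 : d 15 theta = x 1 * x 1 := by
  simp only [d, theta, x]
  norm_num [pderiv_mul, pderiv_X, Pi.single_apply, Fin.ext_iff]
  try ring

lemma dth16 : d 16 theta = (0:A) := by
  simp only [d, theta, x]
  norm_num [pderiv_mul, pderiv_X, Pi.single_apply, Fin.ext_iff]
  try ring

lemma dth17 : d 17 theta = (0:A) := by
  simp only [d, theta, x]
  norm_num [pderiv_mul, pderiv_X, Pi.single_apply, Fin.ext_iff]
  try ring

lemma dth18 : d 18 theta = (0:A) := by
  simp only [d, theta, x]
  norm_num [pderiv_mul, pderiv_X, Pi.single_apply, Fin.ext_iff]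
  try ring

lemma dth19 : d 19 theta = (0:A) := by
  simp only [d, theta, x]
  norm_num [pderiv_mul, pderiv_X, Pi.single_apply, Fin.ext_iff]
  try ring

lemma dth20 : d 20 theta = (0:A) := by
  simp only [d, theta, x]
  norm_num [pderiv_mul, pderiv_X, Pi.single_apply, Fin.ext_iff]
  try ring

lemma dth21 : d 21 theta = (0:A) := by
  simp only [d, theta, x]
  norm_num [pderiv_mul, pderiv_X, Pi.single_apply, Fin.ext_iff]
  try ring

lemma dth22 : d 22 theta = (0:A) := by
  simp only [d, theta, x]
  norm_num [pderiv_mul, pderiv_X, Pi.single_apply, Fin.ext_iff]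
  try ring

lemma dth23 : d 23 theta = (0:A) := by
  simp only [d, theta, x]
  norm_num [pderiv_mul, pderiv_X, Pi.single_apply, Fin.ext_iff]
  try ring

lemma dth24 : d 24 theta = (0:A) := by
  simp only [d, theta, x]
  norm_num [pderiv_mul, pderiv_X, Pi.single_apply, Fin.ext_iff]
  try ring

lemma dth25 : d 25 theta = (0:A) := by
  simp only [d, theta, x]
  norm_num [pderiv_mul, pderiv_X, Pi.single_apply, Fin.ext_iff]
  try ring

lemma dth26 : d 26 theta = (0:A) := by
  simp only [d, theta, x]
  norm_num [pderiv_mul, pderiv_X, Pi.single_apply, Fin.ext_iff]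
  try ring

/-- `ϑ` is a singular vector of weight `λ_3`. -/
theorem stmt6 :
    E1 theta = 0 ∧ E2 theta = 0 ∧ E3 theta = 0 ∧ E4 theta = 0 ∧
    H1 theta = 0 ∧ H2 theta = 0 ∧ H4 theta = 0 ∧ H3 theta = theta := by
  refine ⟨?_, ?_, ?_, ?_, ?_, ?_, ?_, ?_⟩ <;>
  · simp only [E1, E2, E3, E4, H1, H2, H3, H4, dth1, dth2, dth3, dth4, dth5,
      dth6, dth7, dth8, dth9, dth10, dth11, dth12, dth13, dth14, dth15, dth16, dth17,
      dth18, dth19, dth20, dth21, dth22, dth23, dth24, dth25, dth26]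
    try simp only [theta]
    ring
end
end

section
/- For each i ∈ {1,2,3,4} the negative root operator is the τ-conjugate of the positive one: F_i = τ∘E_i∘τ as ℂ-linear operators on A (where τ is an involution, so τ∘E_i∘τ is conjugation by τ). -/
open MvPolynomial

noncomputable section

/-- the permutation underlying `τ` -/
def sg : Fin 26 → Fin 26 := fun i =>
  if i.val = 12 ∨ i.val = 13 then i else ⟨25 - i.val, by omega⟩

/-- the sign underlying `τ` -/
def eps : Fin 26 → ℂ := fun i => if i.val = 12 ∨ i.val = 13 then -1 else 1

lemma tau_X (i : Fin 26) : tau (X i) = eps i • X (sg i) := by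
  by_cases h12 : i.val = 12
  · have : i = ⟨12, by norm_num⟩ := Fin.ext h12
    subst this
    simp [tau, eps, sg, show ((12 : Fin 26) : ℕ) = 12 from rfl]
  by_cases h13 : i.val = 13
  · have : i = ⟨13, by norm_num⟩ := Fin.ext h13
    subst this
    simp [tau, eps, sg, show ((13 : Fin 26) : ℕ) = 13 from rfl]
  simp [tau, eps, sg, h12, h13]

lemma sg_sg (i : Fin 26) : sg (sg i) = i := by
  simp only [sg]
  split_ifs with h h1 h2 <;> first | rfl | (exact Fin.ext (by simp at *; omega)) | (exfalso; simp at *; omega)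

lemma eps_sg (i : Fin 26) : eps (sg i) = eps i := by
  simp only [sg, eps]
  split_ifs with h h1 h2 <;> first | rfl | (exfalso; simp at *; omega)

lemma eps_mul_eps (i : Fin 26) : eps i * eps i = 1 := by
  simp only [eps]; split_ifs <;> ring

lemma tau_tau (f : A) : tau (tau f) = f := by
  have : tau.comp tau = AlgHom.id ℂ A := by
    apply MvPolynomial.algHom_ext
    intro i
    simp only [AlgHom.comp_apply, AlgHom.id_apply]
    rw [show (tau (X i)) = eps i • X (sg i) from tau_X i, map_smul, tau_X, sg_sg, eps_sg,
      smul_smul, eps_mul_eps, one_smul]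
  exact congrFun (congrArg DFunLike.coe this) f

lemma pderiv_tau (j : Fin 26) (f : A) :
    pderiv j (tau f) = eps j • tau (pderiv (sg j) f) := by
  induction f using MvPolynomial.induction_on with
  | C a => simp [tau, aeval_C]
  | add p q hp hq => simp [map_add, hp, hq, smul_add]
  | mul_X p i hp =>
    have key : pderiv j ((eps i • X (sg i)) : A) = if sg j = i then C (eps j) else 0 := by
      rw [smul_eq_C_mul, pderiv_C_mul]
      by_cases hc : sg j = i
      · have hsi : sg i = j := by rw [← hc, sg_sg]
        rw [if_pos hc, hsi, pderiv_X_self, mul_one, ← hc, eps_sg]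
      · rw [if_neg hc, pderiv_X_of_ne, mul_zero]
        intro h
        exact hc (by rw [← h, sg_sg])
    rw [map_mul, pderiv_mul, pderiv_mul, hp, tau_X i, key, map_add, map_mul, tau_X i]
    by_cases hc : sg j = i
    · rw [if_pos hc, ← hc, pderiv_X_self, mul_one, sg_sg, eps_sg]
      simp only [smul_eq_C_mul]
      ring
    · simp only [if_neg hc, pderiv_X_of_ne (fun h => hc h.symm), mul_zero, map_zero, add_zero]
      simp only [smul_eq_C_mul]
      ring

/-- `F_i = τ ∘ E_i ∘ τ` for `i = 1, 2, 3, 4`. -/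
theorem stmt16 :
    (∀ f : A, F1 f = tau (E1 (tau f))) ∧ (∀ f : A, F2 f = tau (E2 (tau f))) ∧
    (∀ f : A, F3 f = tau (E3 (tau f))) ∧ (∀ f : A, F4 f = tau (E4 (tau f))) := by
  refine ⟨fun f => ?_, fun f => ?_, fun f => ?_, fun f => ?_⟩ <;>
  · simp only [F1, E1, F2, E2, F3, E3, F4, E4, x, d]
    norm_num
    simp only [pderiv_tau, map_add, map_sub, map_mul, map_neg, map_smul, map_ofNat, tau_X,
      tau_tau, sg, eps]
    norm_num
    ring
end
end

section
/- The twelve operators E_1,…,E_4, F_1,…,F_4, H_1,…,H_4 satisfy the Chevalley relations of the simple Lie algebra of type F_4: writing [P,Q] = P∘Q − Q∘P for operators on A and letting c be the 4×4 matrix with rows c_1 = (2,−1,0,0), c_2 = (−1,2,−1,0), c_3 = (0,−2,2,−1), c_4 = (0,0,−1,2), one has for all i, j ∈ {1,2,3,4}: [H_i, H_j] = 0, [H_i, E_j] = c_{ij}·E_j, [H_i, F_j] = −c_{ij}·F_j, [E_i, F_i] = −H_i, and [E_i, F_j] = 0 for i ≠ j. -/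
open MvPolynomial

noncomputable section

/-- The simple root vector operators, collected into families. -/
def Eop : Fin 4 → A → A := ![E1, E2, E3, E4]
def Fop : Fin 4 → A → A := ![F1, F2, F3, F4]
def Hop : Fin 4 → A → A := ![H1, H2, H3, H4]

/-- The Cartan matrix of `F_4` (rows as in the statement). -/
def c : Matrix (Fin 4) (Fin 4) ℤ :=
  !![2, -1, 0, 0; -1, 2, -1, 0; 0, -2, 2, -1; 0, 0, -1, 2]

/-!
Each of the twelve operators is the linear vector field `∑ M p q x_p ∂_q` of a sparse integer
matrix `M`, and `M ↦ ∑ M p q x_p ∂_q` is a homomorphism of Lie algebras from matrices under the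
commutator to derivations of `A`: a derivation of a polynomial ring is determined by its values
on the variables. The Chevalley relations of the operators therefore reduce to the same relations
between the matrices, which are finite integer computations left to the kernel.
-/

namespace MvPolynomial

variable {σ R : Type*} [Fintype σ] [DecidableEq σ] [CommRing R]

def linearDerivation : Matrix σ σ R →ₗ[R] Derivation R (MvPolynomial σ R) (MvPolynomial σ R) where
  toFun M := mkDerivation R fun q => ∑ p, M p q • X p
  map_add' M N := derivation_ext fun q => by
    simp [add_smul, Finset.sum_add_distrib]
  map_smul' a M := derivation_ext fun q => by
    simp [Finset.smul_sum, smul_smul]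

omit [DecidableEq σ] in
@[simp]
lemma linearDerivation_X (M : Matrix σ σ R) (q : σ) :
    linearDerivation M (X q) = ∑ p, M p q • X p :=
  mkDerivation_X R _ q

omit [DecidableEq σ] in
lemma linearDerivation_lie (M N : Matrix σ σ R) :
    ⁅linearDerivation M, linearDerivation N⁆ = linearDerivation ⁅M, N⁆ := by
  refine derivation_ext fun q => ?_
  simp only [Derivation.commutator_apply, linearDerivation_X, map_sum, Derivation.map_smul,
    Finset.smul_sum, smul_smul, Ring.lie_def, Matrix.sub_apply, Matrix.mul_apply, sub_smul,
    Finset.sum_smul, Finset.sum_sub_distrib]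
  rw [Finset.sum_comm (f := fun p r => (N p q * M r p) • X r),
    Finset.sum_comm (f := fun p r => (M p q * N r p) • X r)]
  simp only [mul_comm]

lemma linearDerivation_single (i j : σ) :
    linearDerivation (Matrix.single i j (1 : R)) = (X i : MvPolynomial σ R) • pderiv j := by
  refine derivation_ext fun q => ?_
  simp [Matrix.single_apply, pderiv_X, Pi.single_apply, ite_and, eq_comm]

end MvPolynomial

/-- 1-indexed like `x` and `d`, and likewise `0` out of range. -/
def matrixUnit {R : Type*} [Zero R] [One R] (p q : ℕ) : Matrix (Fin 26) (Fin 26) R :=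
  Matrix.of fun i j => if i.val + 1 = p ∧ j.val + 1 = q then 1 else 0

lemma matrixUnit_eq_single {R : Type*} [Zero R] [One R] {p q : ℕ} (hp : 1 ≤ p ∧ p ≤ 26)
    (hq : 1 ≤ q ∧ q ≤ 26) :
    (matrixUnit p q : Matrix (Fin 26) (Fin 26) R)
      = Matrix.single ⟨p - 1, by omega⟩ ⟨q - 1, by omega⟩ 1 := by
  ext i j
  simp only [matrixUnit, Matrix.of_apply, Matrix.single_apply, Fin.ext_iff]
  congr 1
  apply propext
  omega

lemma matrixUnit_eq_zero {R : Type*} [Zero R] [One R] {p q : ℕ}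
    (h : ¬(1 ≤ p ∧ p ≤ 26 ∧ 1 ≤ q ∧ q ≤ 26)) :
    (matrixUnit p q : Matrix (Fin 26) (Fin 26) R) = 0 := by
  ext i j
  simp only [matrixUnit, Matrix.of_apply, Matrix.zero_apply, ite_eq_right_iff]
  omega

lemma linearDerivation_matrixUnit_apply (p q : ℕ) (f : A) :
    linearDerivation (matrixUnit p q) f = x p * d q f := by
  by_cases hp : 1 ≤ p ∧ p ≤ 26
  · by_cases hq : 1 ≤ q ∧ q ≤ 26
    · simp [matrixUnit_eq_single hp hq, linearDerivation_single, x, d, hp, hq]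
    · simp [matrixUnit_eq_zero (by tauto : ¬(1 ≤ p ∧ p ≤ 26 ∧ 1 ≤ q ∧ q ≤ 26)), d, hq]
  · simp [matrixUnit_eq_zero (by tauto : ¬(1 ≤ p ∧ p ≤ 26 ∧ 1 ≤ q ∧ q ≤ 26)), x, hp]

lemma matrixUnit_mul_matrixUnit {R : Type*} [NonAssocSemiring R] (p q r s : ℕ) :
    (matrixUnit p q * matrixUnit r s : Matrix (Fin 26) (Fin 26) R)
      = if r = q ∧ 1 ≤ q ∧ q ≤ 26 then matrixUnit p s else 0 := by
  split_ifs with h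
  · obtain ⟨rfl, hq⟩ := h
    by_cases hp : 1 ≤ p ∧ p ≤ 26
    · by_cases hs : 1 ≤ s ∧ s ≤ 26
      · simp [matrixUnit_eq_single hp hq, matrixUnit_eq_single hq hs, matrixUnit_eq_single hp hs]
      · simp [matrixUnit_eq_zero (by tauto : ¬(1 ≤ r ∧ r ≤ 26 ∧ 1 ≤ s ∧ s ≤ 26)),
          matrixUnit_eq_zero (by tauto : ¬(1 ≤ p ∧ p ≤ 26 ∧ 1 ≤ s ∧ s ≤ 26))]
    · simp [matrixUnit_eq_zero (by tauto : ¬(1 ≤ p ∧ p ≤ 26 ∧ 1 ≤ r ∧ r ≤ 26)),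
        matrixUnit_eq_zero (by tauto : ¬(1 ≤ p ∧ p ≤ 26 ∧ 1 ≤ s ∧ s ≤ 26))]
  · ext i j
    simp only [Matrix.mul_apply, matrixUnit, Matrix.of_apply, Matrix.zero_apply]
    refine Finset.sum_eq_zero fun k _ => ?_
    split_ifs <;> first | (exfalso; omega) | simp

section Terms

variable {R : Type*} [Ring R]

/-- The triples `(a, p, q)` stand for the terms `a x_p ∂_q`. Sparse lists rather than dense
`26 × 26` matrices keep the kernel computations below cheap. -/
def ofTerms (R : Type*) [Ring R] (ts : List (ℤ × ℕ × ℕ)) : Matrix (Fin 26) (Fin 26) R :=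
  (ts.map fun t => t.1 • matrixUnit t.2.1 t.2.2).sum

def termCoeff (ts : List (ℤ × ℕ × ℕ)) (p q : ℕ) : ℤ :=
  (ts.map fun t => if t.2 = (p, q) then t.1 else 0).sum

lemma ofTerms_apply (ts : List (ℤ × ℕ × ℕ)) (i j : Fin 26) :
    ofTerms R ts i j = termCoeff ts (i.val + 1) (j.val + 1) := by
  induction ts with
  | nil => simp [ofTerms, termCoeff]
  | cons t ts ih =>
    obtain ⟨a, p, q⟩ := t
    simp only [ofTerms, termCoeff, List.map_cons, List.sum_cons] at ih ⊢
    rw [Matrix.add_apply, ih, Matrix.smul_apply, matrixUnit, Matrix.of_apply]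
    simp only [Prod.mk.injEq, Int.cast_add]
    congr 1
    split_ifs <;> first | (exfalso; omega) | simp

lemma termCoeff_eq_zero {ts : List (ℤ × ℕ × ℕ)} {p q : ℕ} (h : ∀ t ∈ ts, t.2 ≠ (p, q)) :
    termCoeff ts p q = 0 :=
  List.sum_eq_zero fun a ha => by
    obtain ⟨t, ht, rfl⟩ := List.mem_map.mp ha
    exact if_neg (h t ht)

lemma ofTerms_eq_of_termCoeff {ts us : List (ℤ × ℕ × ℕ)}
    (h : ∀ t ∈ ts ++ us, termCoeff ts t.2.1 t.2.2 = termCoeff us t.2.1 t.2.2) :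
    ofTerms R ts = ofTerms R us := by
  ext i j
  rw [ofTerms_apply, ofTerms_apply]
  by_cases hmem : ∃ t ∈ ts ++ us, t.2 = (i.val + 1, j.val + 1)
  · obtain ⟨⟨a, p, q⟩, ht, hpq⟩ := hmem
    obtain ⟨rfl, rfl⟩ := Prod.mk.inj hpq
    rw [h _ ht]
  · simp only [not_exists, not_and] at hmem
    rw [termCoeff_eq_zero fun t ht => hmem t (List.mem_append_left _ ht),
      termCoeff_eq_zero fun t ht => hmem t (List.mem_append_right _ ht)]

@[simp]
lemma ofTerms_nil : ofTerms R [] = 0 := rfl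

@[simp]
lemma ofTerms_cons (t : ℤ × ℕ × ℕ) (ts : List (ℤ × ℕ × ℕ)) :
    ofTerms R (t :: ts) = t.1 • matrixUnit t.2.1 t.2.2 + ofTerms R ts := rfl

@[simp]
lemma ofTerms_append (ts us : List (ℤ × ℕ × ℕ)) :
    ofTerms R (ts ++ us) = ofTerms R ts + ofTerms R us := by
  simp [ofTerms]

def mulTerms (ts us : List (ℤ × ℕ × ℕ)) : List (ℤ × ℕ × ℕ) :=
  ts.flatMap fun t => (us.filter fun u => u.2.1 = t.2.2 ∧ 1 ≤ t.2.2 ∧ t.2.2 ≤ 26).map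
    fun u => (t.1 * u.1, t.2.1, u.2.2)

lemma matrixUnit_mul_ofTerms (a : ℤ) (p q : ℕ) (us : List (ℤ × ℕ × ℕ)) :
    a • matrixUnit p q * ofTerms R us = ofTerms R
      ((us.filter fun u => u.2.1 = q ∧ 1 ≤ q ∧ q ≤ 26).map fun u => (a * u.1, p, u.2.2)) := by
  induction us with
  | nil => simp
  | cons u us ih =>
    obtain ⟨b, r, s⟩ := u
    rw [ofTerms_cons, mul_add, ih, smul_mul_smul_comm, matrixUnit_mul_matrixUnit]
    by_cases h : r = q ∧ 1 ≤ q ∧ q ≤ 26 <;> simp [h]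

lemma ofTerms_mul (ts us : List (ℤ × ℕ × ℕ)) :
    ofTerms R ts * ofTerms R us = ofTerms R (mulTerms ts us) := by
  induction ts with
  | nil => simp [mulTerms]
  | cons t ts ih =>
    rw [ofTerms_cons, add_mul, ih, matrixUnit_mul_ofTerms]
    simp [mulTerms]

def smulTerms (a : ℤ) (ts : List (ℤ × ℕ × ℕ)) : List (ℤ × ℕ × ℕ) :=
  ts.map fun t => (a * t.1, t.2)

lemma ofTerms_smulTerms (a : ℤ) (ts : List (ℤ × ℕ × ℕ)) :
    ofTerms R (smulTerms a ts) = a • ofTerms R ts := by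
  induction ts with
  | nil => simp [smulTerms]
  | cons t ts ih => simp_all [smulTerms, smul_add, mul_smul]

def lieTerms (ts us : List (ℤ × ℕ × ℕ)) : List (ℤ × ℕ × ℕ) :=
  mulTerms ts us ++ smulTerms (-1) (mulTerms us ts)

lemma lie_ofTerms (ts us : List (ℤ × ℕ × ℕ)) :
    ⁅ofTerms R ts, ofTerms R us⁆ = ofTerms R (lieTerms ts us) := by
  rw [Ring.lie_def, ofTerms_mul, ofTerms_mul, lieTerms, ofTerms_append, ofTerms_smulTerms,
    neg_one_smul, sub_eq_add_neg]

end Terms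

def termsE : Fin 4 → List (ℤ × ℕ × ℕ) := ![
  [(1, 4, 6), (1, 5, 8), (1, 7, 9), (-1, 18, 20), (-1, 19, 22), (-1, 21, 23)],
  [(1, 3, 4), (1, 8, 10), (1, 9, 11), (-1, 16, 18), (-1, 17, 19), (-1, 23, 24)],
  [(-1, 2, 3), (-1, 4, 5), (-1, 6, 8), (1, 10, 12), (1, 11, 13), (-2, 11, 14), (-1, 14, 16),
    (-1, 15, 17), (1, 19, 21), (1, 22, 23), (1, 24, 25)],
  [(-1, 1, 2), (-1, 5, 7), (-1, 8, 9), (-1, 10, 11), (1, 12, 14), (-2, 12, 13), (-1, 13, 15),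
    (1, 16, 17), (1, 18, 19), (1, 20, 22), (1, 25, 26)]]

def termsF : Fin 4 → List (ℤ × ℕ × ℕ) := ![
  [(-1, 6, 4), (-1, 8, 5), (-1, 9, 7), (1, 20, 18), (1, 22, 19), (1, 23, 21)],
  [(-1, 4, 3), (-1, 10, 8), (-1, 11, 9), (1, 18, 16), (1, 19, 17), (1, 24, 23)],
  [(1, 3, 2), (1, 5, 4), (1, 8, 6), (-1, 12, 10), (1, 14, 11), (2, 16, 14), (-1, 16, 13),
    (1, 17, 15), (-1, 21, 19), (-1, 23, 22), (-1, 25, 24)],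
  [(1, 2, 1), (1, 7, 5), (1, 9, 8), (1, 11, 10), (1, 13, 12), (2, 15, 13), (-1, 15, 14),
    (-1, 17, 16), (-1, 19, 18), (-1, 22, 20), (-1, 26, 25)]]

def termsH : Fin 4 → List (ℤ × ℕ × ℕ) := ![
  [(1, 4, 4), (1, 5, 5), (-1, 6, 6), (1, 7, 7), (-1, 8, 8), (-1, 9, 9), (1, 18, 18),
    (1, 19, 19), (-1, 20, 20), (1, 21, 21), (-1, 22, 22), (-1, 23, 23)],
  [(1, 3, 3), (-1, 4, 4), (1, 8, 8), (1, 9, 9), (-1, 10, 10), (-1, 11, 11), (1, 16, 16),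
    (1, 17, 17), (-1, 18, 18), (-1, 19, 19), (1, 23, 23), (-1, 24, 24)],
  [(1, 2, 2), (-1, 3, 3), (1, 4, 4), (-1, 5, 5), (1, 6, 6), (-1, 8, 8), (1, 10, 10),
    (2, 11, 11), (-1, 12, 12), (1, 15, 15), (-2, 16, 16), (-1, 17, 17), (1, 19, 19),
    (-1, 21, 21), (1, 22, 22), (-1, 23, 23), (1, 24, 24), (-1, 25, 25)],
  [(1, 1, 1), (-1, 2, 2), (1, 5, 5), (-1, 7, 7), (1, 8, 8), (-1, 9, 9), (1, 10, 10),
    (-1, 11, 11), (2, 12, 12), (-2, 15, 15), (1, 16, 16), (-1, 17, 17), (1, 18, 18),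
    (-1, 19, 19), (1, 20, 20), (-1, 22, 22), (1, 25, 25), (-1, 26, 26)]]

section

variable {R : Type*} [Ring R]

lemma lie_termsH_termsH (i j : Fin 4) : ⁅ofTerms R (termsH i), ofTerms R (termsH j)⁆ = 0 := by
  rw [lie_ofTerms, ← ofTerms_nil]
  apply ofTerms_eq_of_termCoeff
  revert i j
  decide +kernel

lemma lie_termsH_termsE (i j : Fin 4) :
    ⁅ofTerms R (termsH i), ofTerms R (termsE j)⁆ = c i j • ofTerms R (termsE j) := by
  rw [lie_ofTerms, ← ofTerms_smulTerms]
  apply ofTerms_eq_of_termCoeff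
  revert i j
  decide +kernel

lemma lie_termsH_termsF (i j : Fin 4) :
    ⁅ofTerms R (termsH i), ofTerms R (termsF j)⁆ = -(c i j • ofTerms R (termsF j)) := by
  rw [lie_ofTerms, ← neg_smul, ← ofTerms_smulTerms]
  apply ofTerms_eq_of_termCoeff
  revert i j
  decide +kernel

lemma lie_termsE_termsF_self (i : Fin 4) :
    ⁅ofTerms R (termsE i), ofTerms R (termsF i)⁆ = -ofTerms R (termsH i) := by
  rw [lie_ofTerms, ← neg_one_smul ℤ, ← ofTerms_smulTerms]
  apply ofTerms_eq_of_termCoeff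
  revert i
  decide +kernel

lemma lie_termsE_termsF_of_ne {i j : Fin 4} (hij : i ≠ j) :
    ⁅ofTerms R (termsE i), ofTerms R (termsF j)⁆ = 0 := by
  rw [lie_ofTerms, ← ofTerms_nil]
  apply ofTerms_eq_of_termCoeff
  revert i j
  decide +kernel

end

lemma linearDerivation_ofTerms_apply (ts : List (ℤ × ℕ × ℕ)) (f : A) :
    linearDerivation (ofTerms ℂ ts) f = (ts.map fun t => t.1 • (x t.2.1 * d t.2.2 f)).sum := by
  induction ts with
  | nil => simp
  | cons t ts ih =>
    rw [ofTerms_cons, map_add, Derivation.add_apply, map_zsmul, Derivation.smul_apply,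
      linearDerivation_matrixUnit_apply, ih, List.map_cons, List.sum_cons]

lemma Eop_eq_linearDerivation (i : Fin 4) :
    Eop i = linearDerivation (ofTerms ℂ (termsE i)) := by
  funext f
  rw [linearDerivation_ofTerms_apply]
  fin_cases i <;> simp [Eop, termsE, E1, E2, E3, E4] <;> ring

lemma Fop_eq_linearDerivation (i : Fin 4) :
    Fop i = linearDerivation (ofTerms ℂ (termsF i)) := by
  funext f
  rw [linearDerivation_ofTerms_apply]
  fin_cases i <;> simp [Fop, termsF, F1, F2, F3, F4] <;> ring

lemma Hop_eq_linearDerivation (i : Fin 4) :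
    Hop i = linearDerivation (ofTerms ℂ (termsH i)) := by
  funext f
  rw [linearDerivation_ofTerms_apply]
  fin_cases i <;> simp [Hop, termsH, H1, H2, H3, H4] <;> ring

/-- the twelve operators satisfy the Chevalley relations of `F_4`. -/
theorem stmt18 : ∀ i j : Fin 4, ∀ f : A,
    (Hop i (Hop j f) - Hop j (Hop i f) = 0) ∧
    (Hop i (Eop j f) - Eop j (Hop i f) = (c i j : ℂ) • Eop j f) ∧
    (Hop i (Fop j f) - Fop j (Hop i f) = -((c i j : ℂ) • Fop j f)) ∧
    (i = j → Eop i (Fop j f) - Fop j (Eop i f) = -Hop i f) ∧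
    (i ≠ j → Eop i (Fop j f) - Fop j (Eop i f) = 0) := by
  intro i j f
  simp only [Hop_eq_linearDerivation, Eop_eq_linearDerivation, Fop_eq_linearDerivation,
    ← Derivation.commutator_apply, linearDerivation_lie, Int.cast_smul_eq_zsmul]
  refine ⟨?_, ?_, ?_, ?_, ?_⟩
  · rw [lie_termsH_termsH, map_zero, Derivation.zero_apply]
  · rw [lie_termsH_termsE, map_zsmul, Derivation.smul_apply]
  · rw [lie_termsH_termsF, map_neg, map_zsmul, Derivation.neg_apply, Derivation.smul_apply]
  · rintro rfl
    rw [lie_termsE_termsF_self, map_neg, Derivation.neg_apply]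
  · intro hij
    rw [lie_termsE_termsF_of_ne hij, map_zero, Derivation.zero_apply]
end
end
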